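/- Let n be a positive integer and let p be a real polynomial of degree at most n that is nonnegative on [-1,1] and satisfies p(1) = 1. Then max_{x ∈ [-1,1]} (1-x)·p(x) ≥ 2/(n+1)². -/

import Mathlib

/-!
Interpolate at the `n + 1` points `wᵢ = cos ((i + 1) π / (n + 1))` where `T_{n+1} = (-1)^(i+1)`.
Evaluation at `1 > wᵢ` is then a combination `f(1) = ∑ λᵢ f(wᵢ)` with alternating signs, valid
for every `f` of degree `≤ n`. Compare `p` with `(M/2) (T_{n+1} - 1)/(X - 1)`, `M` the maximum
of `(1 - x) p(x)`: at the nodes with `λᵢ ≥ 0` the comparison polynomial equals `M/(1 - wᵢ) ≥ p(wᵢ)`,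
at the others it vanishes while `p ≥ 0`. Hence `p(1) ≤ (M/2) T'_{n+1}(1) = (M/2)(n + 1)²`.
-/

open Polynomial Polynomial.Chebyshev Finset

namespace Lagrange

theorem eval_eq_sum_eval_mul_eval_basis {F ι : Type*} [Field F] [DecidableEq ι] {s : Finset ι}
    {v : ι → F} (hvs : Set.InjOn v s) {f : F[X]} (hf : f.degree < #s) (x : F) :
    f.eval x = ∑ i ∈ s, f.eval (v i) * (Lagrange.basis s v i).eval x := by
  conv_lhs => rw [eq_interpolate hvs hf]
  simp only [interpolate_apply, eval_finsetSum, eval_mul, eval_C]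

theorem eval_le_eval_of_forall_eval_mul_eval_basis_le {ι : Type*} [DecidableEq ι] {s : Finset ι}
    {v : ι → ℝ} (hvs : Set.InjOn v s) {f g : ℝ[X]} (hf : f.degree < #s) (hg : g.degree < #s)
    {x : ℝ} (h : ∀ i ∈ s, f.eval (v i) * (Lagrange.basis s v i).eval x ≤
      g.eval (v i) * (Lagrange.basis s v i).eval x) :
    f.eval x ≤ g.eval x := by
  rw [eval_eq_sum_eval_mul_eval_basis hvs hf, eval_eq_sum_eval_mul_eval_basis hvs hg]
  exact sum_le_sum h

theorem negOnePow_mul_eval_basis_nonneg {ι : Type*} [LinearOrder ι] {s : Finset ι} {v : ι → ℝ}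
    (hv : StrictAntiOn v s) {i : ι} (hi : i ∈ s) {x : ℝ} (hx : ∀ j ∈ s, v j ≤ x) :
    0 ≤ (-1) ^ #{j ∈ s | j < i} * (Lagrange.basis s v i).eval x := by
  have hsign : (-1 : ℝ) ^ #{j ∈ s | j < i} = ∏ j ∈ s.erase i, if j < i then -1 else 1 := by
    rw [prod_ite, prod_const, prod_const_one, mul_one, filter_erase,
      erase_eq_of_notMem (by simp)]
  rw [hsign, Lagrange.basis, eval_prod, ← prod_mul_distrib]
  refine prod_nonneg fun j hj => ?_
  obtain ⟨hji, hj⟩ := mem_erase.mp hj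
  simp only [basisDivisor, eval_mul, eval_C, eval_sub, eval_X]
  have hxj := sub_nonneg.mpr (hx j hj)
  rcases hji.lt_or_gt with hlt | hgt
  · have := inv_lt_zero.mpr (sub_neg.mpr (hv hj hi hlt))
    simp only [if_pos hlt]
    nlinarith
  · have := inv_pos.mpr (sub_pos.mpr (hv hi hj hgt))
    simp only [if_neg hgt.not_gt, one_mul]
    positivity

end Lagrange

namespace Polynomial.Chebyshev

theorem X_sub_one_mul_T_sub_one_divByMonic {R : Type*} [CommRing R] (m : ℤ) :
    (X - 1) * ((T R m - 1) /ₘ (X - 1)) = T R m - 1 := by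
  simpa using mul_divByMonic_eq_iff_isRoot (a := (1 : R)).mpr (by simp [T_eval_one])

theorem eval_one_T_sub_one_divByMonic {R : Type*} [CommRing R] (m : ℤ) :
    ((T R m - 1) /ₘ (X - 1)).eval 1 = (m : R) ^ 2 := by
  have h := congrArg (eval 1)
    (divByMonic_add_X_sub_C_mul_derivative_divByMonic_eq_derivative (T R m - 1) 1)
  simpa [derivative_T_eval_one] using h

theorem natDegree_T_sub_one_divByMonic_le (m : ℕ) :
    ((T ℝ m - 1) /ₘ (X - 1)).natDegree ≤ m - 1 := by
  have hmonic : (X - 1 : ℝ[X]).Monic := by simpa using monic_X_sub_C (1 : ℝ)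
  rw [natDegree_divByMonic _ hmonic,
    show (X - 1 : ℝ[X]).natDegree = 1 by simpa using natDegree_X_sub_C (1 : ℝ)]
  gcongr
  exact (natDegree_sub_le _ _).trans (by simp [natDegree_T])

theorem node_sub_one_mul_eval_T_sub_one_divByMonic {m k : ℕ} (hk : k ≤ m) :
    (node m k - 1) * ((T ℝ m - 1) /ₘ (X - 1)).eval (node m k) = (-1) ^ k - 1 := by
  have h := congrArg (eval (node m k)) (X_sub_one_mul_T_sub_one_divByMonic (R := ℝ) m)
  simpa [eval_T_real_node (mem_Iic.mpr hk)] using h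

end Polynomial.Chebyshev

theorem eval_node_mul_le_eval_T_sub_one_divByMonic_mul {p : ℝ[X]}
    (hnonneg : ∀ x ∈ Set.Icc (-1 : ℝ) 1, 0 ≤ p.eval x) {M : ℝ}
    (hM : ∀ x ∈ Set.Icc (-1 : ℝ) 1, (1 - x) * p.eval x ≤ M) {m i : ℕ} (hi : i < m) {c : ℝ}
    (hc : 0 ≤ (-1) ^ i * c) :
    p.eval (node m (i + 1)) * c ≤
      (C (M / 2) * ((T ℝ m - 1) /ₘ (X - 1))).eval (node m (i + 1)) * c := by
  rw [eval_mul, eval_C]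
  set w := node m (i + 1)
  set d := ((T ℝ m - 1) /ₘ (X - 1)).eval w
  have hw : w ∈ Set.Icc (-1 : ℝ) 1 := node_mem_Icc
  have hw_lt : w < 1 := node_eq_one (n := m) ▸ node_lt hi i.succ_pos
  have hd : (w - 1) * d = (-1) ^ (i + 1) - 1 := node_sub_one_mul_eval_T_sub_one_divByMonic hi
  rcases i.even_or_odd with heven | hodd
  · rw [pow_succ, heven.neg_one_pow] at hd
    rw [heven.neg_one_pow, one_mul] at hc
    refine mul_le_mul_of_nonneg_right ?_ hc
    refine le_of_mul_le_mul_left ?_ (sub_pos.mpr hw_lt)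
    rw [show (1 - w) * (M / 2 * d) = M by linear_combination (-M / 2) * hd]
    exact hM _ hw
  · rw [(hodd.add_one).neg_one_pow, sub_self, mul_eq_zero,
      or_iff_right (sub_ne_zero.mpr hw_lt.ne)] at hd
    rw [hodd.neg_one_pow, neg_one_mul, neg_nonneg] at hc
    rw [hd, mul_zero, zero_mul]
    exact mul_nonpos_of_nonneg_of_nonpos (hnonneg _ hw) hc

theorem two_mul_eval_one_le_of_one_sub_mul_eval_le {n : ℕ} {p : ℝ[X]} (hdeg : p.natDegree ≤ n)
    (hnonneg : ∀ x ∈ Set.Icc (-1 : ℝ) 1, 0 ≤ p.eval x) {M : ℝ}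
    (hM : ∀ x ∈ Set.Icc (-1 : ℝ) 1, (1 - x) * p.eval x ≤ M) :
    2 * p.eval 1 ≤ ((n : ℝ) + 1) ^ 2 * M := by
  set m := n + 1
  set w : ℕ → ℝ := fun i => node m (i + 1)
  have hw : StrictAntiOn w (range m) := fun i _ j hj hij =>
    node_lt (mem_range.mp hj) (Nat.succ_lt_succ hij)
  have hdeg_lt {f : ℝ[X]} (hf : f.natDegree ≤ n) : f.degree < #(range m) := by
    rw [card_range]
    exact (degree_le_of_natDegree_le hf).trans_lt (WithBot.coe_lt_coe.mpr n.lt_succ_self)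
  have hD : (C (M / 2) * ((T ℝ m - 1) /ₘ (X - 1))).natDegree ≤ n :=
    natDegree_C_mul_le _ _ |>.trans (natDegree_T_sub_one_divByMonic_le m)
  have h := Lagrange.eval_le_eval_of_forall_eval_mul_eval_basis_le hw.injOn (hdeg_lt hdeg)
    (hdeg_lt hD) fun i hi => by
      have hcard : #{j ∈ range m | j < i} = i := by
        rw [show {j ∈ range m | j < i} = range i by ext j; simp at hi ⊢; omega, card_range]
      refine eval_node_mul_le_eval_T_sub_one_divByMonic_mul hnonneg hM (mem_range.mp hi) ?_
      simpa [hcard] using Lagrange.negOnePow_mul_eval_basis_nonneg hw hi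
        (x := 1) fun j _ => Real.cos_le_one _
  rw [eval_mul, eval_C, eval_one_T_sub_one_divByMonic] at h
  push_cast [m] at h
  linarith

theorem modified_chebyshev_lower_bound
    (n : ℕ) (p : Polynomial ℝ)
    (hdeg : p.natDegree ≤ n)
    (hnonneg : ∀ x ∈ Set.Icc (-1 : ℝ) 1, 0 ≤ p.eval x)
    (hone : p.eval 1 = 1) :
    (2 : ℝ) / ((n : ℝ) + 1) ^ 2 ≤
      sSup ((fun x : ℝ => (1 - x) * p.eval x) '' Set.Icc (-1 : ℝ) 1) := by
  have hbdd : BddAbove ((fun x : ℝ => (1 - x) * p.eval x) '' Set.Icc (-1 : ℝ) 1) :=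
    (isCompact_Icc.image (by fun_prop)).bddAbove
  have h := two_mul_eval_one_le_of_one_sub_mul_eval_le hdeg hnonneg
    fun x hx => le_csSup hbdd (Set.mem_image_of_mem _ hx)
  rw [hone, mul_one] at h
  rwa [div_le_iff₀' (by positivity)]
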